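/- Let A : X^n → T be a test-statistic selection procedure and X a dataset drawn from a distribution S over X^n such that the mutual information, measured in bits, satisfies I(X; A(X)) ≤ m. Then γ(α) = (α/2) · 2^{−(2/α)(m + 0.54)} is a valid p-value correction function for A: for every significance level α ∈ (0,1] and every distribution S over X^n, the probability (over X ~ S and the coins of A) that the selected statistic φ_i = A(X) satisfies both S ∈ H_0^(i) and p_i(φ_i(X)) ≤ γ(α) is at most α. -/

import Mathlib

/-!
The argument goes through approximate max-information. Write `F` for the joint law of
`(X, A X)` and `G` for the product of its marginals. The negative parts of the information
density `F log₂ (F / G)` sum to at most `1 / (e ln 2) < 0.54`, so its positive parts sum to at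
most `m + 0.54`, and Markov's inequality bounds the probability of `{F > 2^k G}` by `α / 2`
for `k = (2 / α) (m + 0.54)`. Off that event `F ≤ 2^k G`, and under `G` the selected
statistic is independent of the data, so the p-value is valid and the bad event has
`G`-probability at most `γ`. Altogether the probability is at most `α / 2 + 2^k γ = α`.
-/

open scoped ENNReal

/-- The probability that a sample from the probability mass function `μ` lands in `S`. -/
noncomputable def prob {α : Type*} (μ : PMF α) (S : Set α) : ℝ :=
  (μ.toOuterMeasure S).toReal

/-- The independent coupling of two distributions: a pair whose components are independent
with the given marginal distributions. -/
noncomputable def indepPair {α β : Type*} (p : PMF α) (q : PMF β) : PMF (α × β) :=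
  p.bind fun a => q.map fun b => (a, b)

/-- `MaxInfoLe μ b k` : the `b`-approximate max-information of the joint distribution `μ`
is at most `k` (measured in bits):  for every event `O` with `Pr[(X,Z) ∈ O] > b`,
`Pr[(X,Z) ∈ O] - b ≤ 2^k · Pr[X ⊗ Z ∈ O]`. -/
def MaxInfoLe {α β : Type*} (μ : PMF (α × β)) (b k : ℝ) : Prop :=
  ∀ O : Set (α × β), b < prob μ O →
    prob μ O - b ≤ 2 ^ k * prob (indepPair (μ.map Prod.fst) (μ.map Prod.snd)) O

/-- The `n`-fold product (i.i.d.) distribution `P^n` on datasets of size `n`. -/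
noncomputable def iidPMF {X : Type*} (P : PMF X) : (n : ℕ) → PMF (Fin n → X)
  | 0 => PMF.pure (fun i => i.elim0)
  | n + 1 => P.bind fun a => (iidPMF P n).map fun x => Fin.cons a x

/-- The joint distribution of `(X, A(X))` where `X ∼ μ` and `A` is a randomized algorithm. -/
noncomputable def jointPMF {D Y : Type*} (μ : PMF D) (A : D → PMF Y) : PMF (D × Y) :=
  μ.bind fun x => (A x).map fun y => (x, y)

/-- The summand of the mutual information (in bits) of a joint distribution `μ` at a point. -/
noncomputable def miSummandBits {α β : Type*} (μ : PMF (α × β)) (q : α × β) : ℝ :=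
  (μ q).toReal *
    Real.logb 2 ((μ q).toReal / (((μ.map Prod.fst) q.1).toReal * ((μ.map Prod.snd) q.2).toReal))

/-- The mutual information, measured in bits, between the two components of a joint
distribution `μ`. -/
noncomputable def mutualInfoBits {α β : Type*} (μ : PMF (α × β)) : ℝ :=
  ∑' q : α × β, miSummandBits μ q

open Real

section PMFBasics

variable {α β : Type*}

lemma PMF.apply_le_map_apply (p : PMF α) (f : α → β) (a : α) : p a ≤ p.map f (f a) := by
  classical
  rw [PMF.map_apply]
  simpa using ENNReal.le_tsum (f := fun a' => if f a = f a' then p a' else 0) a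

lemma PMF.summable_toReal (p : PMF α) : Summable fun a => (p a).toReal :=
  ENNReal.summable_toReal p.tsum_coe_ne_top

lemma PMF.tsum_toReal (p : PMF α) : ∑' a, (p a).toReal = 1 := by
  rw [← ENNReal.tsum_toReal_eq p.apply_ne_top, p.tsum_coe, ENNReal.toReal_one]

lemma indepPair_apply (p : PMF α) (q : PMF β) (a : α) (b : β) :
    indepPair p q (a, b) = p a * q b := by
  classical
  simp only [indepPair, PMF.bind_apply, PMF.map_apply, Prod.mk.injEq]
  rw [tsum_eq_single a fun a' ha' => by simp [Ne.symm ha'], tsum_eq_single b fun b' hb' => by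
    simp [Ne.symm hb']]
  simp

lemma jointPMF_map_fst (p : PMF α) (A : α → PMF β) : (jointPMF p A).map Prod.fst = p := by
  simp only [jointPMF, PMF.map_bind, PMF.map_comp]
  exact (congrArg p.bind (funext fun a => PMF.map_const (A a) a)).trans p.bind_pure

lemma indepPair_eq_bind (p : PMF α) (q : PMF β) :
    indepPair p q = q.bind fun b => p.map fun a => (a, b) := by
  simp only [indepPair, ← PMF.bind_pure_comp]
  exact PMF.bind_comm p q _

end PMFBasics

section Prob

variable {α β : Type*}

lemma prob_nonneg (p : PMF α) (s : Set α) : 0 ≤ prob p s := ENNReal.toReal_nonneg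

lemma PMF.toOuterMeasure_ne_top (p : PMF α) (s : Set α) : p.toOuterMeasure s ≠ ⊤ := by
  rw [p.toOuterMeasure_apply]
  exact p.tsum_coe_indicator_ne_top s

lemma prob_mono (p : PMF α) {s t : Set α} (h : s ⊆ t) : prob p s ≤ prob p t :=
  ENNReal.toReal_mono (p.toOuterMeasure_ne_top t) (p.toOuterMeasure.mono h)

lemma prob_le_iff_toOuterMeasure_le {p : PMF α} {s : Set α} {c : ℝ} (hc : 0 ≤ c) :
    prob p s ≤ c ↔ p.toOuterMeasure s ≤ ENNReal.ofReal c :=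
  (ENNReal.le_ofReal_iff_toReal_le (p.toOuterMeasure_ne_top s) hc).symm

lemma prob_eq_tsum (p : PMF α) (s : Set α) :
    prob p s = ∑' a, s.indicator (fun a => (p a).toReal) a := by
  rw [prob, PMF.toOuterMeasure_apply,
    ENNReal.tsum_toReal_eq fun a => ne_top_of_le_ne_top (p.apply_ne_top a) (s.indicator_le_self p a)]
  exact tsum_congr fun a => by by_cases h : a ∈ s <;> simp [h]

lemma prob_pvalue_le (p : PMF α) (v : α → ℝ) {c : ℝ} (hc : 0 ≤ c) :
    prob p {x | prob p {y | v x ≤ v y} ≤ c} ≤ c := by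
  classical
  set E := {x | prob p {y | v x ≤ v y} ≤ c}
  rw [prob_le_iff_toOuterMeasure_le hc, p.toOuterMeasure_apply, ENNReal.tsum_eq_iSup_sum]
  refine iSup_le fun s => ?_
  rw [Finset.sum_indicator_eq_sum_filter, ← p.toOuterMeasure_apply_finset]
  obtain hs | hs := (s.filter (· ∈ E)).eq_empty_or_nonempty
  · simp [hs]
  -- a finite part of `E` lies in the upper set of its `v`-minimum, whose probability is `≤ c`
  obtain ⟨x₀, hx₀, hmin⟩ := (s.filter (· ∈ E)).exists_min_image v hs
  calc p.toOuterMeasure ↑(s.filter (· ∈ E)) ≤ p.toOuterMeasure {y | v x₀ ≤ v y} :=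
        p.toOuterMeasure.mono fun y hy => hmin y hy
    _ ≤ ENNReal.ofReal c := (prob_le_iff_toOuterMeasure_le hc).1 (Finset.mem_filter.1 hx₀).2

lemma prob_indepPair_le (p : PMF α) (q : PMF β) (E : β → Set α) {c : ℝ} (hc : 0 ≤ c)
    (hE : ∀ b, prob p (E b) ≤ c) : prob (indepPair p q) {z | z.1 ∈ E z.2} ≤ c := by
  rw [prob_le_iff_toOuterMeasure_le hc, indepPair_eq_bind, PMF.toOuterMeasure_bind_apply]
  calc ∑' b, q b * (p.map fun a => (a, b)).toOuterMeasure {z | z.1 ∈ E z.2}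
      = ∑' b, q b * p.toOuterMeasure (E b) := by simp only [PMF.toOuterMeasure_map_apply]; rfl
    _ ≤ ∑' b, q b * ENNReal.ofReal c :=
        ENNReal.tsum_le_tsum fun b => by gcongr; exact (prob_le_iff_toOuterMeasure_le hc).1 (hE b)
    _ = ENNReal.ofReal c := by rw [ENNReal.tsum_mul_right, q.tsum_coe, one_mul]

lemma prob_le_prob_add_rpow_mul (p q : PMF α) (k : ℝ) (s : Set α) :
    prob p s ≤ prob p {a | 2 ^ k * (q a).toReal < (p a).toReal} + 2 ^ k * prob q s := by
  have hpoint : ∀ a, s.indicator (fun a => (p a).toReal) a ≤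
      {a | 2 ^ k * (q a).toReal < (p a).toReal}.indicator (fun a => (p a).toReal) a +
        2 ^ k * s.indicator (fun a => (q a).toReal) a := by
    intro a
    have h2k : (0 : ℝ) ≤ 2 ^ k := by positivity
    by_cases has : a ∈ s
    · by_cases hab : 2 ^ k * (q a).toReal < (p a).toReal
      · rw [Set.indicator_of_mem has, Set.indicator_of_mem has,
          Set.indicator_of_mem (show a ∈ {a | 2 ^ k * (q a).toReal < (p a).toReal} from hab)]
        have := mul_nonneg h2k (q a).toReal_nonneg
        linarith
      · rw [Set.indicator_of_mem has, Set.indicator_of_mem has,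
          Set.indicator_of_notMem (show a ∉ {a | 2 ^ k * (q a).toReal < (p a).toReal} from hab),
          zero_add]
        exact not_lt.1 hab
    · simp only [Set.indicator_of_notMem has, mul_zero, add_zero]
      exact Set.indicator_nonneg (fun _ _ => ENNReal.toReal_nonneg) a
  simp only [prob_eq_tsum]
  rw [← tsum_mul_left, ← Summable.tsum_add (p.summable_toReal.indicator _)
    ((q.summable_toReal.indicator _).mul_left _)]
  exact Summable.tsum_le_tsum hpoint (p.summable_toReal.indicator _)
    ((p.summable_toReal.indicator _).add ((q.summable_toReal.indicator _).mul_left _))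

lemma prob_le_of_maxInfoLe {μ : PMF (α × β)} {b k : ℝ} (h : MaxInfoLe μ b k)
    (s : Set (α × β)) :
    prob μ s ≤ b + 2 ^ k * prob (indepPair (μ.map Prod.fst) (μ.map Prod.snd)) s := by
  by_cases hs : b < prob μ s
  · linarith [h s hs]
  · exact le_add_of_le_of_nonneg (not_lt.1 hs) (mul_nonneg (by positivity) (prob_nonneg _ s))

end Prob

section RealInequalities

lemma posPart_eq_add_negPart {G : Type*} [Lattice G] [AddGroup G] [AddLeftMono G] (a : G) :
    a⁺ = a + a⁻ :=
  sub_eq_iff_eq_add.1 (posPart_sub_negPart a)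

lemma Real.log_le_div_exp_one {u : ℝ} (hu : 0 < u) : log u ≤ u / exp 1 := by
  have h := log_le_sub_one_of_pos (div_pos hu (exp_pos 1))
  rw [log_div hu.ne' (exp_pos 1).ne', log_exp] at h
  linarith

lemma neg_mul_logb_div_le {x y : ℝ} (hx : 0 ≤ x) (hy : 0 ≤ y) :
    -(x * logb 2 (x / y)) ≤ (exp 1 * log 2)⁻¹ * y := by
  rcases hx.eq_or_lt with rfl | hx
  · simp only [zero_mul, neg_zero]
    positivity
  rcases hy.eq_or_lt with rfl | hy
  · simp
  have hlog2 : 0 < log 2 := log_pos one_lt_two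
  calc -(x * logb 2 (x / y)) = x * log (y / x) / log 2 := by
        rw [logb, ← inv_div y x, log_inv]
        ring
    _ ≤ x * ((y / x) / exp 1) / log 2 := by
        gcongr
        exact log_le_div_exp_one (div_pos hy hx)
    _ = (exp 1 * log 2)⁻¹ * y := by
        field_simp

lemma mul_le_mul_logb_div_of_rpow_mul_lt {x y k : ℝ} (hy : 0 < y) (h : 2 ^ k * y < x) :
    k * x ≤ x * logb 2 (x / y) := by
  have hx : 0 < x := (mul_pos (by positivity) hy).trans h
  have hk : k ≤ logb 2 (x / y) :=
    (le_logb_iff_rpow_le one_lt_two (div_pos hx hy)).2 ((le_div_iff₀ hy).2 h.le)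
  rw [mul_comm x]
  exact mul_le_mul_of_nonneg_right hk hx.le

lemma inv_exp_one_mul_log_two_lt : (exp 1 * log 2)⁻¹ < 0.54 := by
  have he := exp_one_gt_d9
  have hl := log_two_gt_d9
  rw [inv_lt_comm₀ (by positivity) (by norm_num)]
  nlinarith

end RealInequalities

section MutualInformation

variable {α β : Type*} (μ : PMF (α × β))

lemma miSummandBits_eq (q : α × β) :
    miSummandBits μ q = (μ q).toReal *
      logb 2 ((μ q).toReal / (indepPair (μ.map Prod.fst) (μ.map Prod.snd) q).toReal) := by
  obtain ⟨a, b⟩ := q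
  rw [miSummandBits, indepPair_apply, ENNReal.toReal_mul]

lemma indepPair_map_fst_map_snd_ne_zero {q : α × β} (h : μ q ≠ 0) :
    indepPair (μ.map Prod.fst) (μ.map Prod.snd) q ≠ 0 := by
  obtain ⟨a, b⟩ := q
  rw [indepPair_apply]
  exact mul_ne_zero (ne_bot_of_le_ne_bot h (μ.apply_le_map_apply Prod.fst (a, b)))
    (ne_bot_of_le_ne_bot h (μ.apply_le_map_apply Prod.snd (a, b)))

lemma negPart_miSummandBits_le (q : α × β) :
    (miSummandBits μ q)⁻ ≤
      (exp 1 * log 2)⁻¹ * (indepPair (μ.map Prod.fst) (μ.map Prod.snd) q).toReal := by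
  rw [negPart_def, miSummandBits_eq]
  exact max_le (neg_mul_logb_div_le ENNReal.toReal_nonneg ENNReal.toReal_nonneg) (by positivity)

lemma summable_negPart_miSummandBits : Summable fun q => (miSummandBits μ q)⁻ :=
  Summable.of_nonneg_of_le (fun _ => negPart_nonneg _) (negPart_miSummandBits_le μ)
    ((PMF.summable_toReal _).mul_left _)

lemma tsum_negPart_miSummandBits_le : ∑' q, (miSummandBits μ q)⁻ ≤ (exp 1 * log 2)⁻¹ := by
  calc ∑' q, (miSummandBits μ q)⁻
      ≤ ∑' q, (exp 1 * log 2)⁻¹ * (indepPair (μ.map Prod.fst) (μ.map Prod.snd) q).toReal :=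
        Summable.tsum_le_tsum (negPart_miSummandBits_le μ) (summable_negPart_miSummandBits μ)
          ((PMF.summable_toReal _).mul_left _)
    _ = (exp 1 * log 2)⁻¹ := by rw [tsum_mul_left, PMF.tsum_toReal, mul_one]

variable {μ}

lemma summable_posPart_miSummandBits (hsum : Summable (miSummandBits μ)) :
    Summable fun q => (miSummandBits μ q)⁺ := by
  simpa only [posPart_eq_add_negPart] using hsum.add (summable_negPart_miSummandBits μ)

lemma tsum_posPart_miSummandBits_le (hsum : Summable (miSummandBits μ)) :
    ∑' q, (miSummandBits μ q)⁺ ≤ mutualInfoBits μ + (exp 1 * log 2)⁻¹ := by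
  simp only [posPart_eq_add_negPart]
  rw [Summable.tsum_add hsum (summable_negPart_miSummandBits μ), mutualInfoBits]
  linarith [tsum_negPart_miSummandBits_le μ]

lemma mul_prob_le_tsum_posPart_miSummandBits (hsum : Summable (miSummandBits μ)) (k : ℝ) :
    k * prob μ {q | 2 ^ k * (indepPair (μ.map Prod.fst) (μ.map Prod.snd) q).toReal <
      (μ q).toReal} ≤ ∑' q, (miSummandBits μ q)⁺ := by
  rw [prob_eq_tsum, ← tsum_mul_left]
  refine Summable.tsum_le_tsum (fun q => ?_) ((μ.summable_toReal.indicator _).mul_left k)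
    (summable_posPart_miSummandBits hsum)
  rw [Set.indicator_apply]
  split_ifs with hq
  · change _ < (μ q).toReal at hq
    rw [miSummandBits_eq]
    have hμq : μ q ≠ 0 := fun h0 => by
      simp only [h0, ENNReal.toReal_zero] at hq
      exact hq.not_ge (mul_nonneg (by positivity) ENNReal.toReal_nonneg)
    have hνq := ENNReal.toReal_pos (indepPair_map_fst_map_snd_ne_zero μ hμq) (PMF.apply_ne_top _ q)
    exact (mul_le_mul_logb_div_of_rpow_mul_lt hνq hq).trans (le_posPart _)
  · rw [mul_zero]
    exact posPart_nonneg _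

theorem maxInfoLe_of_mutualInfoBits_le {m b : ℝ} (hsum : Summable (miSummandBits μ))
    (hm : mutualInfoBits μ ≤ m) (hb : 0 < b) : MaxInfoLe μ b ((m + 0.54) / b) := by
  have hpos := tsum_posPart_miSummandBits_le hsum
  have hc := inv_exp_one_mul_log_two_lt
  have hM : 0 < m + 0.54 := by
    linarith [(tsum_nonneg fun q => posPart_nonneg (miSummandBits μ q) :
      0 ≤ ∑' q, (miSummandBits μ q)⁺)]
  have hkb : (m + 0.54) / b * b = m + 0.54 := div_mul_cancel₀ _ hb.ne'
  have hB := mul_prob_le_tsum_posPart_miSummandBits hsum ((m + 0.54) / b)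
  have hBb : prob μ {q | 2 ^ ((m + 0.54) / b) *
      (indepPair (μ.map Prod.fst) (μ.map Prod.snd) q).toReal < (μ q).toReal} ≤ b :=
    le_of_mul_le_mul_left (by linarith) (div_pos hM hb)
  intro O _
  linarith [prob_le_prob_add_rpow_mul μ (indepPair (μ.map Prod.fst) (μ.map Prod.snd))
    ((m + 0.54) / b) O]

end MutualInformation

theorem stmt_17_general {X T : Type*} {n : ℕ} (A : (Fin n → X) → PMF T)
    (φ : T → (Fin n → X) → ℝ) (H0 : T → Set (PMF (Fin n → X))) (m : ℝ)
    (S : PMF (Fin n → X))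
    (hsum : Summable (miSummandBits (jointPMF S A)))
    (hm : mutualInfoBits (jointPMF S A) ≤ m)
    (α : ℝ) (hα0 : 0 < α) :
    prob (jointPMF S A)
      {p : (Fin n → X) × T |
        S ∈ H0 p.2 ∧
        prob S {x | φ p.2 p.1 ≤ φ p.2 x} ≤ (α / 2) * 2 ^ (-(2 / α) * (m + 0.54))} ≤ α := by
  have hγ : 0 ≤ α / 2 * (2 : ℝ) ^ (-(2 / α) * (m + 0.54)) := by positivity
  have hmax := maxInfoLe_of_mutualInfoBits_le hsum hm (half_pos hα0)
  rw [show (m + 0.54) / (α / 2) = 2 / α * (m + 0.54) by ring] at hmax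
  refine (prob_le_of_maxInfoLe hmax _).trans ?_
  rw [jointPMF_map_fst]
  calc α / 2 + 2 ^ (2 / α * (m + 0.54)) * prob (indepPair S _) _
      ≤ α / 2 + 2 ^ (2 / α * (m + 0.54)) * (α / 2 * 2 ^ (-(2 / α) * (m + 0.54))) := by
        gcongr
        exact (prob_mono _ fun z hz => hz.2).trans
          (prob_indepPair_le _ _ _ hγ fun t => prob_pvalue_le S (φ t) hγ)
    _ = α := by
        rw [neg_mul, Real.rpow_neg zero_le_two]
        field_simp
        ring

/-- If the test-statistic selection procedure `A` satisfies the mutual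
information bound `I(X; A(X)) ≤ m` (in bits) when `X ∼ S`, then
`γ(α) = (α/2) · 2^{-(2/α)(m + 0.54)}` is a valid p-value correction function: for every
significance level `α ∈ (0,1]`, the probability (over `X ∼ S` and the coins of `A`) that the
selected statistic `φ (A X)` has `S` in its null hypothesis and p-value at most `γ(α)` is at
most `α`. -/
theorem stmt_17 {X T : Type*} {n : ℕ} (A : (Fin n → X) → PMF T)
    (φ : T → (Fin n → X) → ℝ) (H0 : T → Set (PMF (Fin n → X))) (m : ℝ)
    (S : PMF (Fin n → X))
    (hsum : Summable (miSummandBits (jointPMF S A)))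
    (hm : mutualInfoBits (jointPMF S A) ≤ m)
    (α : ℝ) (hα0 : 0 < α) (hα1 : α ≤ 1) :
    prob (jointPMF S A)
      {p : (Fin n → X) × T |
        S ∈ H0 p.2 ∧
        prob S {x | φ p.2 p.1 ≤ φ p.2 x} ≤ (α / 2) * 2 ^ (-(2 / α) * (m + 0.54))} ≤ α :=
  stmt_17_general A φ H0 m S hsum hm α hα0
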